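/- Suppose two curves g₁, g₂ on a matrix Lie group G satisfy ġᵢ = ξᵢ(t)gᵢ + X̃(gᵢ) + gᵢζᵢ(t), where X̃ satisfies the cocycle property X̃(hg) = h X̃(g) + X̃(h)g and ζ₁(t) = ζ₂(t) for all t. Then the right-invariant relative state g₁₂ = g₁g₂⁻¹ satisfies the self-contained equation d/dt g₁₂ = ξ₁(t) g₁₂ + X̃(g₁₂) − g₁₂ ξ₂(t). -/

import Mathlib

open Matrix

attribute [local instance] Matrix.linftyOpNormedRing Matrix.linftyOpNormedAlgebra

/-! Differentiating `g₁ g₂⁻¹` with `(g⁻¹)' = -g⁻¹ ġ g⁻¹`, the `ζ`-terms cancel because `ζ₁ = ζ₂`.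
The cocycle identity gives `X̃(g⁻¹) = -g⁻¹ X̃(g) g⁻¹`, and with it the two remaining `X̃`-terms
`X̃(g₁) g₂⁻¹ - g₁ g₂⁻¹ X̃(g₂) g₂⁻¹` recombine into `X̃(g₁ g₂⁻¹)`. -/

def IsCocycleOn {R : Type*} [Mul R] [Add R] (G : Set R) (X : R → R) : Prop :=
  ∀ g ∈ G, ∀ h ∈ G, X (h * g) = h * X g + X h * g

namespace IsCocycleOn

variable {R : Type*} [Ring R] {G : Set R} {X : R → R}

theorem apply_one (hX : IsCocycleOn G X) (hone : 1 ∈ G) : X 1 = 0 := by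
  simpa using hX 1 hone 1 hone

theorem apply_of_mul_eq_one (hX : IsCocycleOn G X) (hone : 1 ∈ G) {a b : R} (ha : a ∈ G)
    (hb : b ∈ G) (hba : b * a = 1) (hab : a * b = 1) : X b = -(b * X a * b) := by
  have h : b * X a + X b * a = 0 := by rw [← hX a ha b hb, hba, hX.apply_one hone]
  calc X b = (X b * a) * b := by rw [mul_assoc, hab, mul_one]
    _ = -(b * X a * b) := by rw [eq_neg_of_add_eq_zero_right h, neg_mul]

theorem relative_velocity_eq (hX : IsCocycleOn G X) (hone : 1 ∈ G) {a b b' : R} (ha : a ∈ G)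
    (hb : b ∈ G) (hb' : b' ∈ G) (hbb' : b * b' = 1) (hb'b : b' * b = 1) (ξ₁ ξ₂ ζ : R) :
    (ξ₁ * a + X a + a * ζ) * b' - a * b' * (ξ₂ * b + X b + b * ζ) * b' =
      ξ₁ * (a * b') + X (a * b') - a * b' * ξ₂ := by
  have hcancel (x : R) : b' * (b * x) = x := by rw [← mul_assoc, hb'b, one_mul]
  rw [hX b' hb' a ha, hX.apply_of_mul_eq_one hone hb hb' hb'b hbb']
  simp only [mul_add, add_mul, mul_neg, mul_assoc, hbb', hcancel, mul_one]
  abel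

end IsCocycleOn

section RingInverse

variable {𝕜 R : Type*} [NontriviallyNormedField 𝕜] [NormedRing R] [HasSummableGeomSeries R]
  [NormedAlgebra 𝕜 R] {f g : 𝕜 → R} {f' g' : R} {t : 𝕜}

theorem HasDerivAt.ringInverse (hg : HasDerivAt g g' t) (hu : IsUnit (g t)) :
    HasDerivAt (fun s => Ring.inverse (g s))
      (-(Ring.inverse (g t) * g' * Ring.inverse (g t))) t := by
  have hF := (hasFDerivAt_ringInverse (𝕜 := 𝕜) hu.unit).comp_hasDerivAt_of_eq t hg hu.unit_spec
  simp only [← Ring.inverse_unit, hu.unit_spec] at hF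
  exact hF

theorem HasDerivAt.mul_ringInverse (hf : HasDerivAt f f' t) (hg : HasDerivAt g g' t)
    (hu : IsUnit (g t)) :
    HasDerivAt (fun s => f s * Ring.inverse (g s))
      (f' * Ring.inverse (g t) - f t * Ring.inverse (g t) * g' * Ring.inverse (g t)) t := by
  refine (hf.mul (hg.ringInverse hu)).congr_deriv ?_
  rw [mul_neg, sub_eq_add_neg, mul_assoc, mul_assoc, mul_assoc]

end RingInverse

theorem right_relative_state_autonomous_general (n : ℕ) (G : Set (Matrix (Fin n) (Fin n) ℝ))
    (hone : (1 : Matrix (Fin n) (Fin n) ℝ) ∈ G)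
    (hinv : ∀ a ∈ G, a⁻¹ ∈ G)
    (Xt : Matrix (Fin n) (Fin n) ℝ → Matrix (Fin n) (Fin n) ℝ)
    (ξ₁ ξ₂ ζ₁ ζ₂ : ℝ → Matrix (Fin n) (Fin n) ℝ)
    (hcoc : ∀ g ∈ G, ∀ h ∈ G, Xt (h * g) = h * Xt g + Xt h * g)
    (hζ : ∀ t, ζ₁ t = ζ₂ t)
    (g₁ g₂ : ℝ → Matrix (Fin n) (Fin n) ℝ)
    (hg₁G : ∀ t, g₁ t ∈ G) (hg₂G : ∀ t, g₂ t ∈ G)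
    (hunit : ∀ t, IsUnit (g₂ t))
    (hdg₁ : ∀ t, HasDerivAt g₁ (ξ₁ t * g₁ t + Xt (g₁ t) + g₁ t * ζ₁ t) t)
    (hdg₂ : ∀ t, HasDerivAt g₂ (ξ₂ t * g₂ t + Xt (g₂ t) + g₂ t * ζ₂ t) t) :
    ∀ t, HasDerivAt (fun s => g₁ s * (g₂ s)⁻¹)
      (ξ₁ t * (g₁ t * (g₂ t)⁻¹) + Xt (g₁ t * (g₂ t)⁻¹)
        - (g₁ t * (g₂ t)⁻¹) * ξ₂ t) t := by
  intro t
  have hu := hunit t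
  have hinvG : Ring.inverse (g₂ t) ∈ G := nonsing_inv_eq_ringInverse (g₂ t) ▸ hinv _ (hg₂G t)
  simp_rw [nonsing_inv_eq_ringInverse]
  rw [← IsCocycleOn.relative_velocity_eq hcoc hone (hg₁G t) (hg₂G t) hinvG
    (Ring.mul_inverse_cancel _ hu) (Ring.inverse_mul_cancel _ hu) _ _ (ζ₂ t)]
  exact (hζ t ▸ hdg₁ t).mul_ringInverse (hdg₂ t) hu

/-- If `ġᵢ = ξᵢ(t) gᵢ + X̃(gᵢ) + gᵢ ζᵢ(t)` with `X̃` satisfying the cocycle property and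
`ζ₁ = ζ₂`, then the right-invariant relative state `g₁₂ = g₁ g₂⁻¹` satisfies the
self-contained equation `d/dt g₁₂ = ξ₁(t) g₁₂ + X̃(g₁₂) − g₁₂ ξ₂(t)`. -/
theorem right_relative_state_autonomous (n : ℕ) (G : Set (Matrix (Fin n) (Fin n) ℝ))
    (hone : (1 : Matrix (Fin n) (Fin n) ℝ) ∈ G)
    (hmul : ∀ a ∈ G, ∀ b ∈ G, a * b ∈ G)
    (hinv : ∀ a ∈ G, a⁻¹ ∈ G)
    (Xt : Matrix (Fin n) (Fin n) ℝ → Matrix (Fin n) (Fin n) ℝ)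
    (ξ₁ ξ₂ ζ₁ ζ₂ : ℝ → Matrix (Fin n) (Fin n) ℝ)
    (hcoc : ∀ g ∈ G, ∀ h ∈ G, Xt (h * g) = h * Xt g + Xt h * g)
    (hζ : ∀ t, ζ₁ t = ζ₂ t)
    (g₁ g₂ : ℝ → Matrix (Fin n) (Fin n) ℝ)
    (hg₁G : ∀ t, g₁ t ∈ G) (hg₂G : ∀ t, g₂ t ∈ G)
    (hunit : ∀ t, IsUnit (g₂ t))
    (hdg₁ : ∀ t, HasDerivAt g₁ (ξ₁ t * g₁ t + Xt (g₁ t) + g₁ t * ζ₁ t) t)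
    (hdg₂ : ∀ t, HasDerivAt g₂ (ξ₂ t * g₂ t + Xt (g₂ t) + g₂ t * ζ₂ t) t) :
    ∀ t, HasDerivAt (fun s => g₁ s * (g₂ s)⁻¹)
      (ξ₁ t * (g₁ t * (g₂ t)⁻¹) + Xt (g₁ t * (g₂ t)⁻¹)
        - (g₁ t * (g₂ t)⁻¹) * ξ₂ t) t :=
  right_relative_state_autonomous_general n G hone hinv Xt ξ₁ ξ₂ ζ₁ ζ₂ hcoc hζ g₁ g₂ hg₁G hg₂G hunit
    hdg₁ hdg₂
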